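/- For m ≥ r ≥ l ≥ 1 and 1 ≤ β < m, the number of two-column SSYTs with column lengths r ≥ l, entries at most m, and containing β in the second column is Y_{r,l}^β(m) = Σ_{1 ≤ f ≤ e ≤ β} N_{e-1,f-1} · SSYT_{r-f, l-f}(m-e), where N_{e,f} = (1/e) C(e, f+1) C(e, f) is the Narayana number. -/

import Mathlib

/-- Binomial coefficient for integer arguments, with the convention
`C(n,k) = 0` whenever `k < 0` or `k > n`. -/
def Cz (n k : ℤ) : ℤ :=
  if 0 ≤ k ∧ k ≤ n then (n.toNat.choose k.toNat : ℤ) else 0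

/-- The closed formula `SSYT_{r,k}(m) = ((r-k+1)/(r+1)) C(m,r) C(m+1,k)` for `m ≥ r ≥ k ≥ 0`,
and `0` otherwise. -/
def ssytF (r k m : ℤ) : ℚ :=
  if 0 ≤ k ∧ k ≤ r ∧ r ≤ m then
    ((r - k + 1) * Cz m r * Cz (m + 1) k : ℤ) / ((r : ℚ) + 1)
  else 0

/-- The Narayana number `N_{e,f} = (1/e) C(e,f+1) C(e,f)` (for `e ≥ 1`;
`N_{0,0} = 1` and `N_{0,f} = 0` for `f ≥ 1`). -/
def Nar (e f : ℕ) : ℚ :=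
  if e = 0 then (if f = 0 then 1 else 0)
  else (1 / (e : ℚ)) * (e.choose (f + 1) : ℚ) * (e.choose f : ℚ)

/-- `Ycard r l m β` is the number of SSYTs with two columns of lengths `r ≥ l`, entries in
`{1,…,m}` (encoded in `Fin m`, value = index + 1), such that the value `β` appears
somewhere in the second column. -/
noncomputable def Ycard (r l m β : ℕ) : ℕ :=
  Nat.card {p : (Fin r → Fin m) × (Fin l → Fin m) //
    (StrictMono p.1 ∧ StrictMono p.2 ∧
      ∀ (i : Fin r) (j : Fin l), (i : ℕ) = (j : ℕ) → p.1 i ≤ p.2 j) ∧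
    ∃ j : Fin l, (p.2 j : ℕ) + 1 = β}

/-!
Deleting the entries equal to the largest value `m + 1`, which can only sit at the bottoms of
the two columns, sorts two-column tableaux into four families and gives the recurrence
`F(r, l, m + 1) = F(r, l, m) + F(r - 1, l, m) + F(r, l - 1, m) + F(r - 1, l - 1, m)`.
The closed formula `SSYT_{r,l}(m)` satisfies it, being a `2 × 2` determinant of binomials, hence
so does the Narayana sum for `m ≥ β`; and so does `Y^β` for `m ≥ β`, because the deleted entries
are not `β`. At `m = β` the entry `β` must end the second column, so
`Y^β_{r,l}(β) = SSYT_{r,l-1}(β-1) + SSYT_{r-1,l-1}(β-1)`, and the Narayana sum takes the same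
value by induction on `β`: the Narayana term `N_{β,l-1} = SSYT_{l-1,l-1}(β-1)` supplies the
boundary term at `r = l` that the recurrence misses.

To run the recurrence for `SSYT` and for `Y^β` at once, we count tableaux whose second column
contains a prescribed set `T` of values; deleting `m + 1` from the second column removes it
from `T`. With `T = {m + 1}` only the families ending the second column in `m + 1` survive,
which gives the value at `m = β`.
-/

theorem Cz_natCast (n k : ℕ) : Cz n k = n.choose k := by
  unfold Cz
  split_ifs with h
  · simp
  · rw [Nat.choose_eq_zero_of_lt (by omega), Nat.cast_zero]

theorem Cz_eq_zero {n k : ℤ} (h : ¬(0 ≤ k ∧ k ≤ n)) : Cz n k = 0 :=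
  if_neg h

theorem Cz_pascal {n : ℤ} (k : ℤ) (hn : 1 ≤ n) : Cz n k = Cz (n - 1) k + Cz (n - 1) (k - 1) := by
  obtain ⟨n, rfl⟩ : ∃ n' : ℕ, n = (n' + 1 : ℕ) := ⟨(n - 1).toNat, by omega⟩
  rcases lt_or_ge k 0 with hk | hk
  · rw [Cz_eq_zero (by omega), Cz_eq_zero (by omega), Cz_eq_zero (by omega), add_zero]
  obtain ⟨k, rfl⟩ := Int.eq_ofNat_of_zero_le hk
  rcases k with _ | k
  · rw [Cz_eq_zero (k := (0:ℕ) - 1) (by omega), add_zero, show ((n + 1 : ℕ) : ℤ) - 1 = n by omega,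
      Cz_natCast, Cz_natCast, Nat.choose_zero_right, Nat.choose_zero_right]
  · have hn : ((n + 1 : ℕ) : ℤ) - 1 = n := by omega
    have hk : ((k + 1 : ℕ) : ℤ) - 1 = k := by omega
    rw [hn, hk, Cz_natCast, Cz_natCast, Cz_natCast, Nat.choose_succ_succ', Nat.cast_add, add_comm]

theorem Cz_absorption (m j : ℤ) : (j + 1) * Cz (m + 1) (j + 1) = (m + 1) * Cz m j := by
  by_cases h : 0 ≤ j ∧ j ≤ m
  · obtain ⟨m, rfl⟩ := Int.eq_ofNat_of_zero_le (h.1.trans h.2)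
    obtain ⟨j, rfl⟩ := Int.eq_ofNat_of_zero_le h.1
    have e : ∀ a : ℕ, (a : ℤ) + 1 = (a + 1 : ℕ) := fun a => by push_cast; ring
    rw [e, e, Cz_natCast, Cz_natCast, mul_comm]
    exact_mod_cast (Nat.add_one_mul_choose_eq m j).symm
  · rw [Cz_eq_zero h, mul_zero]
    obtain rfl | h' : j = -1 ∨ ¬(0 ≤ j + 1 ∧ j + 1 ≤ m + 1) := by omega
    · simp
    · rw [Cz_eq_zero h', mul_zero]

theorem ssytF_eq_zero {r k m : ℤ} (h : ¬(0 ≤ k ∧ k ≤ r)) : ssytF r k m = 0 :=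
  if_neg (by tauto)

theorem ssytF_eq_zero_of_lt {r k m : ℤ} (h : m < r) : ssytF r k m = 0 :=
  if_neg (by omega)

theorem ssytF_zero_right (r k : ℤ) : ssytF r k 0 = if r = 0 ∧ k = 0 then 1 else 0 := by
  by_cases h : r = 0 ∧ k = 0
  · obtain ⟨rfl, rfl⟩ := h
    simp [ssytF, Cz]
  · rw [if_neg h, ssytF, if_neg (by omega)]

/-- The Jacobi–Trudi form of `ssytF`; in this form `ssytF_pascal` is Pascal's rule applied to
each binomial. -/
theorem ssytF_eq_det {r k : ℤ} (m : ℤ) (h : k ≤ r + 1) :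
    ssytF r k m = ((Cz m r * Cz (m + 1) k - Cz (m + 1) (r + 1) * Cz m (k - 1) : ℤ) : ℚ) := by
  by_cases hs : 0 ≤ k ∧ k ≤ r ∧ r ≤ m
  · have hr : (r : ℚ) + 1 ≠ 0 := by norm_cast; omega
    have hA := Cz_absorption m r
    have hB := Cz_absorption m (k - 1)
    rw [sub_add_cancel] at hB
    have key : (r - k + 1) * Cz m r * Cz (m + 1) k
        = (Cz m r * Cz (m + 1) k - Cz (m + 1) (r + 1) * Cz m (k - 1)) * (r + 1) := by
      linear_combination Cz m (k - 1) * hA - Cz m r * hB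
    rw [ssytF, if_pos hs, div_eq_iff hr]
    exact_mod_cast key
  · rw [ssytF, if_neg hs]
    obtain hk | rfl | ⟨hk, hrm⟩ : k < 0 ∨ k = r + 1 ∨ (0 ≤ k ∧ m < r) := by omega
    · rw [Cz_eq_zero (k := k) (by omega), Cz_eq_zero (k := k - 1) (by omega)]
      simp
    · rw [add_sub_cancel_right]
      push_cast
      ring
    · rw [Cz_eq_zero (n := m) (by omega), Cz_eq_zero (k := r + 1) (by omega)]
      simp

theorem ssytF_pascal {r k m : ℤ} (hk : k ≤ r) (hm : 1 ≤ m) :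
    ssytF r k m = ssytF r k (m - 1) + ssytF (r - 1) k (m - 1)
      + ssytF r (k - 1) (m - 1) + ssytF (r - 1) (k - 1) (m - 1) := by
  simp only [ssytF_eq_det _ (show k ≤ r + 1 by omega),
    ssytF_eq_det _ (show k ≤ r - 1 + 1 by omega), ssytF_eq_det _ (show k - 1 ≤ r + 1 by omega),
    ssytF_eq_det _ (show k - 1 ≤ r - 1 + 1 by omega), sub_add_cancel]
  conv_lhs => rw [Cz_pascal r hm, Cz_pascal k (show 1 ≤ m + 1 by omega),
    Cz_pascal (r + 1) (show 1 ≤ m + 1 by omega), Cz_pascal (k - 1) hm, add_sub_cancel_right,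
    add_sub_cancel_right]
  push_cast
  ring

theorem Nar_eq_ssytF {β f : ℕ} (hβ : 1 ≤ β) (hf : 1 ≤ f) :
    Nar β (f - 1) = ssytF ((f : ℤ) - 1) ((f : ℤ) - 1) ((β : ℤ) - 1) := by
  obtain ⟨b, rfl⟩ : ∃ b, β = b + 1 := ⟨β - 1, by omega⟩
  obtain ⟨g, rfl⟩ : ∃ g, f = g + 1 := ⟨f - 1, by omega⟩
  push_cast
  simp only [add_sub_cancel_right, Nar, Nat.add_one_ne_zero, if_false]
  by_cases hgb : g ≤ b
  · rw [ssytF, if_pos ⟨by omega, le_rfl, by omega⟩, Cz_natCast,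
      show (b : ℤ) + 1 = (b + 1 : ℕ) by push_cast; ring, Cz_natCast]
    have key : ((b + 1 : ℕ) : ℚ) * b.choose g = (b + 1).choose (g + 1) * (g + 1 : ℕ) := by
      exact_mod_cast Nat.add_one_mul_choose_eq b g
    push_cast at key ⊢
    field_simp
    linear_combination -((b + 1).choose g : ℚ) * key
  · rw [ssytF_eq_zero_of_lt (by omega), Nat.choose_eq_zero_of_lt (by omega)]
    simp

/-- The recurrence obtained by deleting the largest entries of two-column tableaux. -/
structure IsPascalRecurrence (F : ℤ → ℤ → ℕ → ℚ) (m₀ : ℕ) : Prop where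
  eq_zero : ∀ r l m, ¬(0 ≤ l ∧ l ≤ r) → F r l m = 0
  succ : ∀ r l m, 0 ≤ l → l ≤ r → m₀ ≤ m →
    F r l (m + 1) = F r l m + F (r - 1) l m + F r (l - 1) m + F (r - 1) (l - 1) m

theorem IsPascalRecurrence.eq_of_base {F G : ℤ → ℤ → ℕ → ℚ} {m₀ : ℕ} (hF : IsPascalRecurrence F m₀)
    (hG : IsPascalRecurrence G m₀) (h₀ : ∀ r l, 0 ≤ l → l ≤ r → F r l m₀ = G r l m₀)
    {m : ℕ} (hm : m₀ ≤ m) (r l : ℤ) : F r l m = G r l m := by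
  induction m, hm using Nat.le_induction generalizing r l with
  | base =>
    by_cases h : 0 ≤ l ∧ l ≤ r
    · exact h₀ r l h.1 h.2
    · rw [hF.eq_zero r l _ h, hG.eq_zero r l _ h]
  | succ m hm ih =>
    by_cases h : 0 ≤ l ∧ l ≤ r
    · rw [hF.succ r l m h.1 h.2 hm, hG.succ r l m h.1 h.2 hm, ih, ih, ih, ih]
    · rw [hF.eq_zero r l _ h, hG.eq_zero r l _ h]

theorem ssytF_isPascalRecurrence : IsPascalRecurrence (fun r l m => ssytF r l m) 0 where
  eq_zero _ _ _ h := ssytF_eq_zero h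
  succ r l m _ hlr _ := by
    simpa using ssytF_pascal (m := (m : ℤ) + 1) hlr (by omega)

def narayanaSum (β : ℕ) (r l : ℤ) (m : ℕ) : ℚ :=
  ∑ e ∈ Finset.Icc 1 β, ∑ f ∈ Finset.Icc 1 e,
    Nar (e - 1) (f - 1) * ssytF (r - f) (l - f) ((m : ℤ) - e)

theorem narayanaSum_isPascalRecurrence (β : ℕ) : IsPascalRecurrence (narayanaSum β) β where
  eq_zero r l m h := Finset.sum_eq_zero fun e _ => Finset.sum_eq_zero fun f hf => by
    rw [ssytF_eq_zero (by have := (Finset.mem_Icc.mp hf).1; omega), mul_zero]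
  succ r l m _ hlr hm := by
    simp only [narayanaSum, ← Finset.sum_add_distrib, ← mul_add]
    refine Finset.sum_congr rfl fun e he => Finset.sum_congr rfl fun f _ => ?_
    have he : e ≤ β := (Finset.mem_Icc.mp he).2
    rw [ssytF_pascal (by omega) (by omega),
      show ((m + 1 : ℕ) : ℤ) - e - 1 = m - e by push_cast; ring,
      show r - f - 1 = r - 1 - f by ring, show l - f - 1 = l - 1 - f by ring]

theorem sum_Nar_mul_ssytF_zero {β : ℕ} (hβ : 1 ≤ β) (r l : ℤ) :
    ∑ f ∈ Finset.Icc 1 (β + 1), Nar β (f - 1) * ssytF (r - f) (l - f) 0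
      = if r = l then ssytF (l - 1) (l - 1) ((β : ℤ) - 1) else 0 := by
  simp only [ssytF_zero_right, mul_ite, mul_one, mul_zero]
  by_cases hrl : r = l
  swap
  · rw [if_neg hrl]
    exact Finset.sum_eq_zero fun f _ => if_neg (by omega)
  subst hrl
  rw [if_pos rfl]
  rcases lt_or_ge r 1 with hr | hr
  · rw [ssytF_eq_zero (by omega)]
    exact Finset.sum_eq_zero fun f hf => if_neg (by have := (Finset.mem_Icc.mp hf).1; omega)
  obtain ⟨n, rfl⟩ := Int.eq_ofNat_of_zero_le (by omega : 0 ≤ r)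
  simp only [sub_eq_zero, and_self, Nat.cast_inj, Finset.sum_ite_eq, Finset.mem_Icc]
  split_ifs with hn
  · exact Nar_eq_ssytF hβ hn.1
  · rw [ssytF_eq_zero_of_lt (by omega)]

theorem narayanaSum_self {β : ℕ} (hβ : 1 ≤ β) {r l : ℤ} (hlr : l ≤ r) :
    narayanaSum β r l β =
      ssytF r (l - 1) ((β : ℤ) - 1) + ssytF (r - 1) (l - 1) ((β : ℤ) - 1) := by
  induction β, hβ using Nat.le_induction generalizing r l with
  | base =>
    simp only [narayanaSum, Finset.Icc_self, Finset.sum_singleton, Nat.cast_one, sub_self,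
      ssytF_zero_right]
    rw [show Nar 0 0 = 1 by simp [Nar], one_mul, if_neg (show ¬(r = 0 ∧ l - 1 = 0) by omega),
      zero_add]
  | succ β hβ ih =>
    rcases lt_or_ge l 0 with hl | hl
    · rw [(narayanaSum_isPascalRecurrence _).eq_zero _ _ _ (by omega), ssytF_eq_zero (by omega),
        ssytF_eq_zero (by omega), add_zero]
    have hsplit : narayanaSum (β + 1) r l (β + 1) = narayanaSum β r l (β + 1)
        + ∑ f ∈ Finset.Icc 1 (β + 1), Nar β (f - 1) * ssytF (r - f) (l - f) 0 := by
      rw [narayanaSum, Finset.sum_Icc_succ_top (by omega), narayanaSum, sub_self]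
      simp
    rw [hsplit, (narayanaSum_isPascalRecurrence β).succ r l β hl hlr le_rfl,
      sum_Nar_mul_ssytF_zero hβ, ih hlr, ih (by omega : l - 1 ≤ r),
      ih (by omega : l - 1 ≤ r - 1), Nat.cast_add_one, add_sub_cancel_right,
      ssytF_pascal (by omega) (by omega : (1 : ℤ) ≤ β),
      ssytF_pascal (by omega) (by omega : (1 : ℤ) ≤ β)]
    rcases hlr.lt_or_eq with hlr | rfl
    · rw [ih (by omega : l ≤ r - 1), if_neg hlr.ne']
      ring
    · -- `narayanaSum β (l - 1) l β` vanishes; the Narayana term `Nar β (l - 1)` replaces it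
      rw [(narayanaSum_isPascalRecurrence _).eq_zero _ _ _ (by omega), if_pos rfl,
        ssytF_eq_zero (by omega : ¬(0 ≤ l - 1 ∧ l - 1 ≤ l - 1 - 1))]
      ring

theorem strictMono_snoc_castSucc_last {k m : ℕ} {g : Fin k → Fin m} (hg : StrictMono g) :
    StrictMono (Fin.snoc (Fin.castSucc ∘ g) (Fin.last m) : Fin (k + 1) → Fin (m + 1)) := by
  rw [← Fin.insertNth_last', Fin.strictMono_insertNth_iff]
  exact ⟨Fin.strictMono_castSucc.comp hg, fun i _ => Fin.castSucc_lt_last _,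
    fun i h => absurd h (by simp)⟩

theorem StrictMono.apply_last_eq_last {k m : ℕ} {f : Fin (k + 1) → Fin (m + 1)}
    (hf : StrictMono f) (h : Fin.last m ∈ Set.range f) : f (Fin.last k) = Fin.last m := by
  obtain ⟨i, hi⟩ := h
  exact le_antisymm (Fin.le_last _) (hi ▸ hf.monotone (Fin.le_last i))

def columnAvoidEquiv (k m : ℕ) : {g : Fin k → Fin m // StrictMono g} ≃
    {f : Fin k → Fin (m + 1) // StrictMono f ∧ Fin.last m ∉ Set.range f} where
  toFun g := ⟨Fin.castSucc ∘ g.1, Fin.strictMono_castSucc.comp g.2, by simp⟩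
  invFun f := ⟨fun i => (f.1 i).castPred fun h => f.2.2 ⟨i, h⟩,
    fun _ _ hab => Fin.castPred_lt_castPred_iff.2 (f.2.1 hab)⟩
  left_inv g := by ext; simp
  right_inv f := by ext; simp

def columnHitEquiv (k m : ℕ) : {g : Fin k → Fin m // StrictMono g} ≃
    {f : Fin (k + 1) → Fin (m + 1) // StrictMono f ∧ Fin.last m ∈ Set.range f} where
  toFun g := ⟨Fin.snoc (Fin.castSucc ∘ g.1) (Fin.last m), strictMono_snoc_castSucc_last g.2,
    ⟨Fin.last k, by simp⟩⟩
  invFun f := ⟨fun i => (f.1 i.castSucc).castPred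
      ((f.2.1 (Fin.castSucc_lt_last i)).trans_eq (f.2.1.apply_last_eq_last f.2.2)).ne,
    fun _ _ hab => Fin.castPred_lt_castPred_iff.2 (f.2.1 (Fin.castSucc_lt_castSucc_iff.2 hab))⟩
  left_inv g := by ext; simp
  right_inv f := by
    ext i
    cases i using Fin.lastCases
    · simp [f.2.1.apply_last_eq_last f.2.2]
    · simp

def RowWeak {r l n : ℕ} (u : Fin r → Fin n) (v : Fin l → Fin n) : Prop :=
  ∀ (i : Fin r) (j : Fin l), (i : ℕ) = j → u i ≤ v j

theorem Fin.forall_ne_val_iff_le {r l : ℕ} : (∀ j : Fin l, ¬r = j) ↔ l ≤ r :=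
  ⟨fun h => not_lt.1 fun hr => h ⟨r, hr⟩ rfl, fun h j hj => by omega⟩

section
variable {r l m : ℕ} (g : Fin r → Fin m) (h : Fin l → Fin m)

theorem rowWeak_castSucc_castSucc :
    RowWeak (Fin.castSucc ∘ g) (Fin.castSucc ∘ h) ↔ RowWeak g h := by
  simp [RowWeak]

theorem rowWeak_castSucc_snoc :
    RowWeak (Fin.castSucc ∘ g) (Fin.snoc (Fin.castSucc ∘ h) (Fin.last m) : Fin (l + 1) → _) ↔
      RowWeak g h := by
  simp [RowWeak, Fin.forall_fin_succ', Fin.le_last]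

theorem rowWeak_snoc_castSucc :
    RowWeak (Fin.snoc (Fin.castSucc ∘ g) (Fin.last m) : Fin (r + 1) → _) (Fin.castSucc ∘ h) ↔
      l ≤ r ∧ RowWeak g h := by
  simp [RowWeak, Fin.forall_fin_succ', Fin.forall_ne_val_iff_le, and_comm]

theorem rowWeak_snoc_snoc :
    RowWeak (Fin.snoc (Fin.castSucc ∘ g) (Fin.last m) : Fin (r + 1) → _)
      (Fin.snoc (Fin.castSucc ∘ h) (Fin.last m) : Fin (l + 1) → _) ↔ l ≤ r ∧ RowWeak g h := by
  simp [RowWeak, Fin.forall_fin_succ', Fin.le_last, Fin.forall_ne_val_iff_le, and_comm]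
end

theorem range_val_snoc_castSucc_last {l m : ℕ} (h : Fin l → Fin m) :
    Set.range (fun j =>
      ((Fin.snoc (Fin.castSucc ∘ h) (Fin.last m) : Fin (l + 1) → Fin (m + 1)) j : ℕ)) =
      insert m (Set.range fun j => (h j : ℕ)) := by
  rw [← Fin.range_snoc]
  congr 1
  ext j
  cases j using Fin.lastCases <;> simp

theorem Nat.card_subtype_and_add_and_not {α : Type*} [Finite α] (P Q : α → Prop) :
    Nat.card {x // P x} = Nat.card {x // P x ∧ Q x} + Nat.card {x // P x ∧ ¬Q x} := by
  classical
  rw [← Nat.card_sum]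
  exact Nat.card_congr ((Equiv.sumCompl fun x : {x // P x} => Q x).symm.trans
    ((Equiv.subtypeSubtypeEquivSubtypeInter P Q).sumCongr
      (Equiv.subtypeSubtypeEquivSubtypeInter P (¬Q ·))))

theorem Nat.card_subtype_eq_add_add_add {α : Type*} [Finite α] (P Q₁ Q₂ : α → Prop) :
    Nat.card {x // P x} =
      Nat.card {x // (P x ∧ ¬Q₁ x) ∧ ¬Q₂ x} + Nat.card {x // (P x ∧ Q₁ x) ∧ ¬Q₂ x}
      + Nat.card {x // (P x ∧ ¬Q₁ x) ∧ Q₂ x} + Nat.card {x // (P x ∧ Q₁ x) ∧ Q₂ x} := by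
  rw [Nat.card_subtype_and_add_and_not P Q₁,
    Nat.card_subtype_and_add_and_not (fun x => P x ∧ Q₁ x) Q₂,
    Nat.card_subtype_and_add_and_not (fun x => P x ∧ ¬Q₁ x) Q₂]
  ring

def Equiv.subtypeProdAndEquiv {α β : Type*} (P : α → Prop) (Q : β → Prop) (R : α → β → Prop) :
    {p : α × β // (P p.1 ∧ Q p.2) ∧ R p.1 p.2} ≃ {q : {a // P a} × {b // Q b} // R q.1 q.2} :=
  (Equiv.subtypeSubtypeEquivSubtypeInter _ (fun p : α × β => R p.1 p.2)).symm.trans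
    (Equiv.subtypeEquiv Equiv.subtypeProdEquivProd fun _ => Iff.rfl)

theorem Nat.card_subtype_prod_congr {α β α' β' : Type*} {P : α → Prop} {Q : β → Prop}
    {P' : α' → Prop} {Q' : β' → Prop} {R : α → β → Prop} {R' : α' → β' → Prop}
    (e₁ : {a // P a} ≃ {a // P' a}) (e₂ : {b // Q b} ≃ {b // Q' b})
    (h : ∀ a b, R' (e₁ a) (e₂ b) ↔ R a b) :
    Nat.card {p : α × β // (P p.1 ∧ Q p.2) ∧ R p.1 p.2}
      = Nat.card {p : α' × β' // (P' p.1 ∧ Q' p.2) ∧ R' p.1 p.2} :=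
  Nat.card_congr ((Equiv.subtypeProdAndEquiv P Q R).trans
    ((Equiv.subtypeEquiv (e₁.prodCongr e₂) fun _ => (h _ _).symm).trans
      (Equiv.subtypeProdAndEquiv P' Q' R').symm))

/-- Values are `0`-based: `x : Fin n` stands for the entry `x + 1`. -/
noncomputable def tabCount (T : Set ℕ) (r l n : ℕ) : ℕ :=
  Nat.card {p : (Fin r → Fin n) × (Fin l → Fin n) //
    (StrictMono p.1 ∧ StrictMono p.2) ∧ RowWeak p.1 p.2 ∧ T ⊆ Set.range fun j => (p.2 j : ℕ)}

noncomputable def tabPiece (T : Set ℕ) (r l m : ℕ) (s₁ : (Fin r → Fin (m + 1)) → Prop)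
    (s₂ : (Fin l → Fin (m + 1)) → Prop) : ℕ :=
  Nat.card {p : (Fin r → Fin (m + 1)) × (Fin l → Fin (m + 1)) //
    ((StrictMono p.1 ∧ s₁ p.1) ∧ (StrictMono p.2 ∧ s₂ p.2)) ∧
      RowWeak p.1 p.2 ∧ T ⊆ Set.range fun j => (p.2 j : ℕ)}

/-- `tabCount` extended by zero outside the shapes `0 ≤ l ≤ r`, so that its recurrence has no
boundary cases. -/
noncomputable def tabCountZ (T : Set ℕ) (r l : ℤ) (m : ℕ) : ℚ :=
  if 0 ≤ l ∧ l ≤ r then tabCount T r.toNat l.toNat m else 0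

theorem tabCountZ_natCast_eq_ite (T : Set ℕ) (r l m : ℕ) :
    tabCountZ T r l m = if l ≤ r then (tabCount T r l m : ℚ) else 0 := by
  simp [tabCountZ]

theorem tabCountZ_natCast (T : Set ℕ) {r l : ℕ} (m : ℕ) (h : l ≤ r) :
    tabCountZ T r l m = tabCount T r l m := by
  simp [tabCountZ, h]

section
variable (T : Set ℕ) (r l m : ℕ)

theorem tabCount_succ_eq_add_tabPiece :
    tabCount T r l (m + 1) =
      tabPiece T r l m (Fin.last m ∉ Set.range ·) (Fin.last m ∉ Set.range ·)
      + tabPiece T r l m (Fin.last m ∈ Set.range ·) (Fin.last m ∉ Set.range ·)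
      + tabPiece T r l m (Fin.last m ∉ Set.range ·) (Fin.last m ∈ Set.range ·)
      + tabPiece T r l m (Fin.last m ∈ Set.range ·) (Fin.last m ∈ Set.range ·) := by
  have piece : ∀ (s₁ : (Fin r → Fin (m + 1)) → Prop) (s₂ : (Fin l → Fin (m + 1)) → Prop),
      Nat.card {p : (Fin r → Fin (m + 1)) × (Fin l → Fin (m + 1)) //
        (((StrictMono p.1 ∧ StrictMono p.2) ∧ RowWeak p.1 p.2 ∧
          T ⊆ Set.range fun j => (p.2 j : ℕ)) ∧ s₁ p.1) ∧ s₂ p.2} = tabPiece T r l m s₁ s₂ :=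
    fun _ _ => Nat.card_congr (Equiv.subtypeEquivRight fun _ => by tauto)
  rw [tabCount, Nat.card_subtype_eq_add_add_add _ (fun p => Fin.last m ∈ Set.range p.1)
    (fun p => Fin.last m ∈ Set.range p.2)]
  simp only [← piece]

theorem tabPiece_avoid_avoid :
    tabPiece T r l m (Fin.last m ∉ Set.range ·) (Fin.last m ∉ Set.range ·) = tabCount T r l m := by
  rw [tabPiece, ← Nat.card_subtype_prod_congr (columnAvoidEquiv r m) (columnAvoidEquiv l m)
    (R := fun u v => RowWeak u v ∧ T ⊆ Set.range fun j => (v j : ℕ))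
    (R' := fun u v => RowWeak u v ∧ T ⊆ Set.range fun j => (v j : ℕ))
    (fun g h => by simp [columnAvoidEquiv, rowWeak_castSucc_castSucc])]
  rfl

theorem tabPiece_hit_avoid :
    (tabPiece T r l m (Fin.last m ∈ Set.range ·) (Fin.last m ∉ Set.range ·) : ℚ) =
      tabCountZ T (r - 1) l m := by
  rcases r with _ | r
  · rw [tabCountZ, if_neg (by omega)]
    simp [tabPiece]
  rw [tabPiece, ← Nat.card_subtype_prod_congr (columnHitEquiv r m) (columnAvoidEquiv l m)
    (R := fun u v => l ≤ r ∧ RowWeak u v ∧ T ⊆ Set.range fun j => (v j : ℕ))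
    (R' := fun u v => RowWeak u v ∧ T ⊆ Set.range fun j => (v j : ℕ))
    (fun g h => by simp [columnAvoidEquiv, columnHitEquiv, rowWeak_snoc_castSucc, and_assoc]),
    Nat.cast_succ, add_sub_cancel_right, tabCountZ_natCast_eq_ite]
  split_ifs with hlr <;> simp [hlr, tabCount]

theorem tabPiece_avoid_hit (hlr : l ≤ r + 1) :
    (tabPiece T r l m (Fin.last m ∉ Set.range ·) (Fin.last m ∈ Set.range ·) : ℚ) =
      tabCountZ (T \ {m}) r (l - 1) m := by
  rcases l with _ | l
  · rw [tabCountZ, if_neg (by omega)]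
    simp [tabPiece]
  rw [tabPiece, ← Nat.card_subtype_prod_congr (columnAvoidEquiv r m) (columnHitEquiv l m)
    (R := fun u v => RowWeak u v ∧ T \ {m} ⊆ Set.range fun j => (v j : ℕ))
    (R' := fun u v => RowWeak u v ∧ T ⊆ Set.range fun j => (v j : ℕ))
    (fun g h => by simp [columnAvoidEquiv, columnHitEquiv, rowWeak_castSucc_snoc,
      range_val_snoc_castSucc_last]),
    Nat.cast_succ, add_sub_cancel_right, tabCountZ_natCast _ _ (by omega)]
  rfl

theorem tabPiece_hit_hit :
    (tabPiece T r l m (Fin.last m ∈ Set.range ·) (Fin.last m ∈ Set.range ·) : ℚ) =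
      tabCountZ (T \ {m}) (r - 1) (l - 1) m := by
  rcases l with _ | l
  · rw [tabCountZ, if_neg (by omega)]
    simp [tabPiece]
  rcases r with _ | r
  · rw [tabCountZ, if_neg (by omega)]
    simp [tabPiece]
  rw [tabPiece, ← Nat.card_subtype_prod_congr (columnHitEquiv r m) (columnHitEquiv l m)
    (R := fun u v => l ≤ r ∧ RowWeak u v ∧ T \ {m} ⊆ Set.range fun j => (v j : ℕ))
    (R' := fun u v => RowWeak u v ∧ T ⊆ Set.range fun j => (v j : ℕ))
    (fun g h => by simp [columnHitEquiv, rowWeak_snoc_snoc, range_val_snoc_castSucc_last,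
      and_assoc]),
    Nat.cast_succ, Nat.cast_succ, add_sub_cancel_right, add_sub_cancel_right,
    tabCountZ_natCast_eq_ite]
  split_ifs with hlr <;> simp [hlr, tabCount]

end

theorem tabCountZ_succ (T : Set ℕ) {r l : ℤ} (hl : 0 ≤ l) (hlr : l ≤ r) (m : ℕ) :
    tabCountZ T r l (m + 1) = tabCountZ T r l m + tabCountZ T (r - 1) l m
      + tabCountZ (T \ {m}) r (l - 1) m + tabCountZ (T \ {m}) (r - 1) (l - 1) m := by
  lift l to ℕ using hl
  lift r to ℕ using (by omega)
  rw [Nat.cast_le] at hlr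
  rw [tabCountZ_natCast _ _ hlr, tabCountZ_natCast _ _ hlr, tabCount_succ_eq_add_tabPiece,
    tabPiece_avoid_avoid]
  push_cast
  rw [tabPiece_hit_avoid, tabPiece_avoid_hit _ _ _ _ (by omega), tabPiece_hit_hit]

theorem tabCountZ_isPascalRecurrence (T : Set ℕ) {m₀ : ℕ} (hT : ∀ m, m₀ ≤ m → m ∉ T) :
    IsPascalRecurrence (tabCountZ T) m₀ where
  eq_zero _ _ _ h := if_neg h
  succ r l m hl hlr hm := by
    rw [tabCountZ_succ T hl hlr, Set.sdiff_singleton_eq_self (hT m hm)]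

theorem tabCount_eq_zero_of_mem {T : Set ℕ} {m : ℕ} (hm : m ∈ T) (r l : ℕ) :
    tabCount T r l m = 0 := by
  rw [tabCount, Nat.card_eq_zero]
  left
  refine ⟨fun ⟨p, _, _, hT⟩ => ?_⟩
  obtain ⟨j, hj⟩ := hT hm
  exact (p.2 j).isLt.ne hj

theorem tabCountZ_eq_zero_of_mem {T : Set ℕ} {m : ℕ} (hm : m ∈ T) (r l : ℤ) :
    tabCountZ T r l m = 0 := by
  rw [tabCountZ]
  split_ifs <;> simp [tabCount_eq_zero_of_mem hm]

theorem tabCountZ_empty_eq_ssytF (r l : ℤ) (m : ℕ) : tabCountZ ∅ r l m = ssytF r l m := by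
  refine (tabCountZ_isPascalRecurrence ∅ fun _ _ => id).eq_of_base ssytF_isPascalRecurrence ?_
    m.zero_le r l
  intro r l hl hlr
  lift l to ℕ using hl
  lift r to ℕ using (by omega)
  rw [tabCountZ_natCast _ _ (by omega), Nat.cast_zero, ssytF_zero_right]
  rcases r with _ | r
  · obtain rfl : l = 0 := by omega
    have hsm : ∀ f : Fin 0 → Fin 0, StrictMono f := fun _ a => a.elim0
    simp [tabCount, RowWeak, hsm]
  · rw [if_neg (by omega)]
    simp [tabCount]

theorem tabCountZ_self {β : ℕ} (hβ : 1 ≤ β) {r l : ℤ} (hl : 0 ≤ l) (hlr : l ≤ r) :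
    tabCountZ {β - 1} r l β =
      ssytF r (l - 1) ((β : ℤ) - 1) + ssytF (r - 1) (l - 1) ((β : ℤ) - 1) := by
  obtain ⟨b, rfl⟩ : ∃ b, β = b + 1 := ⟨β - 1, by omega⟩
  rw [Nat.add_sub_cancel, tabCountZ_succ _ hl hlr, Set.sdiff_self,
    tabCountZ_eq_zero_of_mem (Set.mem_singleton b), tabCountZ_eq_zero_of_mem (Set.mem_singleton b),
    tabCountZ_empty_eq_ssytF, tabCountZ_empty_eq_ssytF, zero_add, zero_add, Nat.cast_succ,
    add_sub_cancel_right]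

theorem Ycard_eq_tabCount (r l m β : ℕ) (hβ : 1 ≤ β) : Ycard r l m β = tabCount {β - 1} r l m :=
  Nat.card_congr <| Equiv.subtypeEquivRight fun _ => by
    simp only [RowWeak, Set.singleton_subset_iff, Set.mem_range, and_assoc,
      eq_tsub_iff_add_eq_of_le hβ]

theorem Ycard_eq_narayana_general (r l m β : ℕ) (hlr : l ≤ r) (hβ : 1 ≤ β) (hβm : β < m) :
    (Ycard r l m β : ℚ) =
      ∑ e ∈ Finset.Icc 1 β, ∑ f ∈ Finset.Icc 1 e,
        Nar (e - 1) (f - 1) *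
          ssytF ((r : ℤ) - (f : ℤ)) ((l : ℤ) - (f : ℤ)) ((m : ℤ) - (e : ℤ)) := by
  rw [Ycard_eq_tabCount r l m β hβ, ← tabCountZ_natCast _ _ hlr]
  have hY : IsPascalRecurrence (tabCountZ {β - 1}) β :=
    tabCountZ_isPascalRecurrence _ fun n hn => by rw [Set.mem_singleton_iff]; omega
  exact hY.eq_of_base (narayanaSum_isPascalRecurrence β)
    (fun r' l' hl' hlr' => by rw [tabCountZ_self hβ hl' hlr', narayanaSum_self hβ hlr']) hβm.le r l

/-- For `m ≥ r ≥ l ≥ 1` and `1 ≤ β < m`,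
`Y_{r,l}^β(m) = Σ_{1≤f≤e≤β} N_{e-1,f-1} · SSYT_{r-f,l-f}(m-e)`. -/
theorem Ycard_eq_narayana (r l m β : ℕ) (hl : 1 ≤ l) (hlr : l ≤ r) (hrm : r ≤ m)
    (hβ : 1 ≤ β) (hβm : β < m) :
    (Ycard r l m β : ℚ) =
      ∑ e ∈ Finset.Icc 1 β, ∑ f ∈ Finset.Icc 1 e,
        Nar (e - 1) (f - 1) *
          ssytF ((r : ℤ) - (f : ℤ)) ((l : ℤ) - (f : ℤ)) ((m : ℤ) - (e : ℤ)) :=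
  Ycard_eq_narayana_general r l m β hlr hβ hβm
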